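/- Fix k > 0 and for t ∈ ℝ define w(t) = k t √2 e^{−3iπ/8} √(1 + (t²/2) e^{iπ/4}), using the principal square root. Then for every t ∈ ℝ: (i) √(k² − w(t)²) = k + k t² e^{iπ/4}; (ii) α_*(w(t)) = i √(k² − w(t)²) = ik − k t² e^{−iπ/4}; and (iii) |w(t)| ≤ k(1 + t²). -/

import Mathlib

open MeasureTheory Set Real

noncomputable section

/-- The branch cuts `B = {-k+is : s ≤ 0} ∪ {k+is : s ≥ 0}` of `α_*`. -/
def branchCuts (k : ℝ) : Set ℂ :=
  {z | z.re = -k ∧ z.im ≤ 0} ∪ {z | z.re = k ∧ 0 ≤ z.im}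

/-- The function `α_*(ξ) = -√(i(ξ-k))·√(-i(ξ+k))`, with principal square roots. -/
noncomputable def alphaStar (k : ℝ) (ξ : ℂ) : ℂ :=
  -((Complex.I * (ξ - k)) ^ (1/2 : ℂ) * ((-Complex.I) * (ξ + k)) ^ (1/2 : ℂ))

/-- The steepest-descent contour `w(t) = k t √2 e^{-3iπ/8} √(1 + (t²/2) e^{iπ/4})`. -/
noncomputable def wCont (k : ℝ) (t : ℝ) : ℂ :=
  (k : ℂ) * t * Real.sqrt 2 * Complex.exp (-(3 * π / 8) * Complex.I) *
    (1 + ((t : ℂ) ^ 2 / 2) * Complex.exp (π / 4 * Complex.I)) ^ (1/2 : ℂ)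

lemma sqrt_of_sq {z : ℂ} (hz : 0 < z.re) : (z ^ 2) ^ (1/2 : ℂ) = z := by
  rw [show (1/2 : ℂ) = (2 : ℂ)⁻¹ by norm_num]
  exact Complex.sq_cpow_two_inv hz

lemma expc : Complex.exp ((π:ℂ) / 4 * Complex.I) =
    ((Real.sqrt 2 : ℝ) : ℂ) / 2 * (1 + Complex.I) := by
  rw [Complex.exp_mul_I, show ((π:ℂ)/4) = ((π/4 : ℝ) : ℂ) by push_cast; ring,
    ← Complex.ofReal_cos, ← Complex.ofReal_sin, Real.cos_pi_div_four, Real.sin_pi_div_four]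
  push_cast; ring

lemma expc3 : Complex.exp (-(3 * (π:ℂ) / 8) * Complex.I) =
    ((Real.sin (π/8) : ℝ) : ℂ) - ((Real.cos (π/8) : ℝ) : ℂ) * Complex.I := by
  rw [Complex.exp_mul_I, show (-(3 * (π:ℂ) / 8)) = ((-(3*π/8) : ℝ) : ℂ) by push_cast; ring,
    ← Complex.ofReal_cos, ← Complex.ofReal_sin, Real.cos_neg, Real.sin_neg,
    show (3*π/8 : ℝ) = π/2 - π/8 by ring, Real.cos_pi_div_two_sub, Real.sin_pi_div_two_sub]
  push_cast; ring

lemma expc4 : Complex.exp (-((π:ℂ) / 4) * Complex.I) =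
    ((Real.sqrt 2 : ℝ) : ℂ) / 2 * (1 - Complex.I) := by
  rw [Complex.exp_mul_I, show (-((π:ℂ)/4)) = ((-(π/4) : ℝ) : ℂ) by push_cast; ring,
    ← Complex.ofReal_cos, ← Complex.ofReal_sin, Real.cos_neg, Real.sin_neg,
    Real.cos_pi_div_four, Real.sin_pi_div_four]
  push_cast; ring


private lemma aux_sbounds {s : ℝ} (hs2 : s^2 = 2) (hs0 : 0 < s) : 1 < s ∧ s ≤ 3/2 :=
  ⟨by nlinarith, by nlinarith⟩

private lemma aux_x {s : ℝ} (t : ℝ) (hs0 : 0 < s) : 0 < 1 + s/4*t^2 := by positivity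

private lemma aux_rx {s t r : ℝ} (hr0 : 0 ≤ r) (hr2 : r^2 = (1 + s/4*t^2)^2 + (s/4*t^2)^2)
    (hx0 : 0 < 1 + s/4*t^2) : 1 + s/4*t^2 ≤ r := by
  nlinarith [sq_nonneg (s/4*t^2)]

private lemma aux_D {s k t : ℝ} (hk : 0 < k) (hs0 : 0 < s) : 0 < k + k*t^2*(s/2) := by
  have h' : 0 ≤ k*t^2*(s/2) := mul_nonneg (mul_nonneg hk.le (sq_nonneg t)) (by positivity)
  linarith

private lemma aux_pos {s t r σ μ p q : ℝ} (hs2 : s^2 = 2) (hs0 : 0 < s) (hs1 : 1 < s)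
    (hσ0 : 0 < σ) (hμ0 : 0 ≤ μ)
    (hσ2 : σ^2 = (r + (1 + s/4*t^2))/2) (hμ2 : μ^2 = (r - (1 + s/4*t^2))/2)
    (hσμ : 2*σ*μ = s/4*t^2) (hrx : 1 + s/4*t^2 ≤ r)
    (hpq1 : p^2+q^2 = 1) (h2pq : 2*p*q = s/2) :
    (0 < s/2*(σ+μ) + s^2/4*(t*(p-q))) ∧ (0 < s/2*(σ+μ) - s^2/4*(t*(p-q))) := by
  have hsum : 1 + s/2*t^2 ≤ (σ + μ)^2 := by nlinarith [hσ2, hμ2, hσμ, hrx]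
  have hd2 : (p - q)^2 = 1 - s/2 := by nlinarith [hpq1, h2pq]
  have keyRe : (t*(p - q))^2 < (s*(σ + μ))^2 := by nlinarith [hsum, hd2, hs2, hs1, sq_nonneg t]
  have hsσμ : 0 ≤ s*(σ + μ) := by positivity
  have h1 : 0 < s*(σ+μ) + t*(p-q) := by nlinarith [keyRe, hsσμ]
  have h2 : 0 < s*(σ+μ) - t*(p-q) := by nlinarith [keyRe, hsσμ]
  have hv : s^2/4*(t*(p-q)) = (t*(p-q))/2 := by linear_combination (t*(p-q)/4) * hs2
  rw [hv]
  constructor <;> linarith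

private lemma aux_abs {s t r : ℝ} (hs2 : s^2 = 2) (hs0 : 0 < s) (hs15 : s ≤ 3/2)
    (hr0 : 0 ≤ r) (hr2 : r^2 = (1 + s/4*t^2)^2 + (s/4*t^2)^2) :
    |t| * s * Real.sqrt r ≤ 1 + t^2 := by
  have hu0 : 0 ≤ |t| * s * Real.sqrt r := by positivity
  have husq : (|t| * s * Real.sqrt r)^2 = 2 * (t^2 * r) := by
    rw [mul_pow, mul_pow, sq_abs, Real.sq_sqrt hr0, hs2]; ring
  have hr2t : 4*t^4*r^2 = 4*t^4*((1 + s/4*t^2)^2 + (s/4*t^2)^2) := by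
    linear_combination 4*t^4*hr2
  have hs2t : t^8*s^2 = 2*t^8 := by linear_combination t^8*hs2
  have h2tr : 0 ≤ 2*(t^2*r) := by positivity
  have hbound : 2 * (t^2 * r) ≤ (1 + t^2)^2 := by
    nlinarith [hr2t, hs2t, h2tr, sq_nonneg (1+t^2), sq_nonneg (t^3), hs15, hr0, sq_nonneg t,
      sq_nonneg (t^2)]
  nlinarith [hu0, husq, hbound, sq_nonneg (1 + t^2 - |t| * s * Real.sqrt r)]

set_option maxHeartbeats 2000000 in
/-- Along the contour `w(t)`: (i) `√(k² - w(t)²) = k + k t² e^{iπ/4}`;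
(ii) `α_*(w(t)) = i√(k² - w(t)²) = ik - k t² e^{-iπ/4}`; (iii) `|w(t)| ≤ k(1+t²)`. -/
theorem statement_10 (k : ℝ) (hk : 0 < k) (t : ℝ) :
    ((k : ℂ) ^ 2 - wCont k t ^ 2) ^ (1/2 : ℂ) =
        (k : ℂ) + k * t ^ 2 * Complex.exp (π / 4 * Complex.I) ∧
    alphaStar k (wCont k t) = Complex.I * ((k : ℂ) ^ 2 - wCont k t ^ 2) ^ (1/2 : ℂ) ∧
    alphaStar k (wCont k t) =
        Complex.I * k - k * t ^ 2 * Complex.exp (-(π / 4) * Complex.I) ∧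
    ‖wCont k t‖ ≤ k * (1 + t ^ 2) := by
  have hI : Complex.I ^ 2 = -1 := Complex.I_sq
  -- real constants
  set s : ℝ := Real.sqrt 2 with hs_def
  have hs2 : s ^ 2 = 2 := Real.sq_sqrt (by norm_num)
  have hs0 : 0 < s := Real.sqrt_pos.2 (by norm_num)
  have hs1 : 1 < s := (aux_sbounds hs2 hs0).1
  have hs15 : s ≤ 3/2 := (aux_sbounds hs2 hs0).2
  set p : ℝ := Real.cos (π/8) with hp_def
  set q : ℝ := Real.sin (π/8) with hq_def
  have hpi : (0:ℝ) < π := Real.pi_pos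
  have hpq1 : p ^ 2 + q ^ 2 = 1 := by
    rw [hp_def, hq_def]; exact Real.cos_sq_add_sin_sq _
  have h2pq : 2 * p * q = s / 2 := by
    have h := Real.sin_two_mul (π/8)
    rw [show 2 * (π/8) = π/4 by ring, Real.sin_pi_div_four] at h
    rw [hp_def, hq_def, hs_def]; linarith [h]
  have hp2q2 : p ^ 2 - q ^ 2 = s / 2 := by
    have h := Real.cos_two_mul' (π/8)
    rw [show 2 * (π/8) = π/4 by ring, Real.cos_pi_div_four] at h
    rw [hp_def, hq_def, hs_def]; linarith [h]
  set r : ℝ := Real.sqrt ((1 + s/4*t^2)^2 + (s/4*t^2)^2) with hr_def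
  have hr0 : 0 ≤ r := Real.sqrt_nonneg _
  have hr2 : r ^ 2 = (1 + s/4*t^2)^2 + (s/4*t^2)^2 := Real.sq_sqrt (by positivity)
  have hx0 : (0:ℝ) < 1 + s/4*t^2 := aux_x t hs0
  have hrx : 1 + s/4*t^2 ≤ r := aux_rx hr0 hr2 hx0
  set σ : ℝ := Real.sqrt ((r + (1 + s/4*t^2))/2) with hσ_def
  set μ : ℝ := Real.sqrt ((r - (1 + s/4*t^2))/2) with hμ_def
  have hσ0 : 0 < σ := Real.sqrt_pos.2 (by linarith)
  have hμ0 : 0 ≤ μ := Real.sqrt_nonneg _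
  have hσ2 : σ ^ 2 = (r + (1 + s/4*t^2))/2 := Real.sq_sqrt (by linarith)
  have hμ2 : μ ^ 2 = (r - (1 + s/4*t^2))/2 := Real.sq_sqrt (by linarith)
  have hσμ : 2 * σ * μ = s/4*t^2 := by
    have h1 : σ * μ = Real.sqrt (((r + (1 + s/4*t^2))/2) * ((r - (1 + s/4*t^2))/2)) :=
      (Real.sqrt_mul (by linarith) _).symm
    have h2 : ((r + (1 + s/4*t^2))/2) * ((r - (1 + s/4*t^2))/2) = (s/4*t^2/2)^2 := by
      linear_combination (1/4) * hr2
    rw [h2, Real.sqrt_sq (by positivity)] at h1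
    linarith
  set sk : ℝ := Real.sqrt k with hsk_def
  have hsk0 : 0 < sk := Real.sqrt_pos.2 hk
  have hskR : sk ^ 2 = k := Real.sq_sqrt hk.le
  -- complex casts
  have hs2C : ((s:ℝ):ℂ) ^ 2 = 2 := by exact_mod_cast congrArg (fun x : ℝ => (x:ℂ)) hs2
  have hskC : ((sk:ℝ):ℂ) ^ 2 = (k:ℂ) := by exact_mod_cast congrArg (fun x : ℝ => (x:ℂ)) hskR
  have Hσ : ((σ:ℝ):ℂ) ^ 2 = ((r:ℝ):ℂ)/2 + (1 + (s:ℂ)/4*(t:ℂ)^2)/2 := by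
    have := congrArg (fun x : ℝ => (x:ℂ)) hσ2; push_cast at this ⊢; linear_combination this
  have Hμ : ((μ:ℝ):ℂ) ^ 2 = ((r:ℝ):ℂ)/2 - (1 + (s:ℂ)/4*(t:ℂ)^2)/2 := by
    have := congrArg (fun x : ℝ => (x:ℂ)) hμ2; push_cast at this ⊢; linear_combination this
  have Hσμ : 2 * ((σ:ℝ):ℂ) * ((μ:ℝ):ℂ) = (s:ℂ)/4*(t:ℂ)^2 := by
    have := congrArg (fun x : ℝ => (x:ℂ)) hσμ; push_cast at this ⊢; linear_combination this
  have Hpq1 : ((p:ℝ):ℂ) ^ 2 + ((q:ℝ):ℂ) ^ 2 = 1 := by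
    exact_mod_cast congrArg (fun x : ℝ => (x:ℂ)) hpq1
  have H2pq : 2 * ((p:ℝ):ℂ) * ((q:ℝ):ℂ) = (s:ℂ)/2 := by
    have := congrArg (fun x : ℝ => (x:ℂ)) h2pq; push_cast at this ⊢; linear_combination this
  have Hp2q2 : ((p:ℝ):ℂ) ^ 2 - ((q:ℝ):ℂ) ^ 2 = (s:ℂ)/2 := by
    have := congrArg (fun x : ℝ => (x:ℂ)) hp2q2; push_cast at this ⊢; linear_combination this
  -- complex objects
  set c : ℂ := Complex.exp ((π:ℂ)/4 * Complex.I) with hc_def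
  have hc : c = (s:ℂ)/2 * (1 + Complex.I) := by rw [hc_def, expc, hs_def]
  set E : ℂ := Complex.exp (-(3 * (π:ℂ)/8) * Complex.I) with hE_def
  have hE : E = ((q:ℝ):ℂ) - ((p:ℝ):ℂ) * Complex.I := by rw [hE_def, expc3, hp_def, hq_def]
  have hE2 : E ^ 2 = -((s:ℂ)/2 * (1 + Complex.I)) := by
    rw [hE]
    linear_combination (-1 : ℂ)*Hp2q2 - Complex.I*H2pq + ((p:ℝ):ℂ)^2*hI
  set S : ℂ := ((σ:ℝ):ℂ) + ((μ:ℝ):ℂ) * Complex.I with hS_def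
  have hS2 : S ^ 2 = 1 + (t:ℂ)^2/2 * ((s:ℂ)/2 * (1 + Complex.I)) := by
    rw [hS_def]
    linear_combination Hσ - Hμ + Complex.I*Hσμ + ((μ:ℝ):ℂ)^2*hI
  have hSre : 0 < S.re := by rw [hS_def]; simpa using hσ0
  -- w = k t s E S
  have hwS : wCont k t = (k:ℂ) * (t:ℂ) * ((s:ℝ):ℂ) * E * S := by
    rw [wCont, ← hs_def, ← hE_def, ← hc_def, hc, ← hS2, sqrt_of_sq hSre]
  -- part (i)
  have key1 : (k:ℂ)^2 - wCont k t ^ 2 = ((k:ℂ) + (k:ℂ)*(t:ℂ)^2*c)^2 := by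
    rw [hwS, hc]
    linear_combination ((-1)*(k:ℂ)^2*(t:ℂ)^2*(s:ℂ)^2*S^2)*hE2 + ((1/2)*(k:ℂ)^2*(t:ℂ)^2*(s:ℂ)^3 + (1/2)*(k:ℂ)^2*(t:ℂ)^2*(s:ℂ)^3*Complex.I)*hS2 + ((1/2)*(k:ℂ)^2*(t:ℂ)^2*(s:ℂ) + (1/2)*(k:ℂ)^2*(t:ℂ)^2*(s:ℂ)*Complex.I + (1/8)*(k:ℂ)^2*(t:ℂ)^4*(s:ℂ)^2 + (1/4)*(k:ℂ)^2*(t:ℂ)^4*(s:ℂ)^2*Complex.I + (1/8)*(k:ℂ)^2*(t:ℂ)^4*(s:ℂ)^2*Complex.I^2)*hs2C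
  have hDre : 0 < ((k:ℂ) + (k:ℂ)*(t:ℂ)^2*c).re := by
    rw [hc]
    have e : (k:ℂ) + (k:ℂ)*(t:ℂ)^2*((s:ℂ)/2 * (1 + Complex.I)) =
        ((k + k*t^2*(s/2) : ℝ) : ℂ) + ((k*t^2*(s/2) : ℝ) : ℂ)*Complex.I := by
      push_cast; ring
    rw [e, Complex.add_re, Complex.ofReal_re, Complex.re_ofReal_mul, Complex.I_re, mul_zero,
      add_zero]
    exact aux_D hk hs0
  have G1 : ((k:ℂ)^2 - wCont k t ^ 2) ^ (1/2 : ℂ) = (k:ℂ) + (k:ℂ)*(t:ℂ)^2*c := by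
    rw [key1, sqrt_of_sq hDre]
  -- parts (ii),(iii)
  set A : ℂ := (s:ℂ)/2*(1 - Complex.I)*S + (s:ℂ)/2*(1 + Complex.I)*(Complex.I*E)*(t:ℂ)*((s:ℂ)/2) with hA_def
  set B : ℂ := (s:ℂ)/2*(1 - Complex.I)*S - (s:ℂ)/2*(1 + Complex.I)*(Complex.I*E)*(t:ℂ)*((s:ℂ)/2) with hB_def
  have keyA : Complex.I * ((k:ℂ) * (t:ℂ) * ((s:ℝ):ℂ) * E * S - (k:ℂ)) = (((sk:ℝ):ℂ)*A)^2 := by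
    rw [hA_def]
    linear_combination ((-1/4)*(s:ℂ)^2*S^2 + (1/2)*(s:ℂ)^2*S^2*Complex.I + (-1/4)*(s:ℂ)^2*S^2*Complex.I^2 + (-1/4)*(t:ℂ)*(s:ℂ)^3*E*S*Complex.I + (1/4)*(t:ℂ)*(s:ℂ)^3*E*S*Complex.I^3 + (-1/16)*(t:ℂ)^2*(s:ℂ)^4*E^2*Complex.I^2 + (-1/8)*(t:ℂ)^2*(s:ℂ)^4*E^2*Complex.I^3 + (-1/16)*(t:ℂ)^2*(s:ℂ)^4*E^2*Complex.I^4)*hskC + ((-1/16)*(k:ℂ)*(t:ℂ)^2*(s:ℂ)^4*Complex.I^2 + (-1/8)*(k:ℂ)*(t:ℂ)^2*(s:ℂ)^4*Complex.I^3 + (-1/16)*(k:ℂ)*(t:ℂ)^2*(s:ℂ)^4*Complex.I^4)*hE2 + ((-1/4)*(k:ℂ)*(s:ℂ)^2 + (1/2)*(k:ℂ)*(s:ℂ)^2*Complex.I + (-1/4)*(k:ℂ)*(s:ℂ)^2*Complex.I^2)*hS2 + ((-1/4)*(k:ℂ) + (1/2)*(k:ℂ)*Complex.I + (-1/4)*(k:ℂ)*Complex.I^2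 + (-1/4)*(k:ℂ)*(t:ℂ)*(s:ℂ)*E*S*Complex.I + (1/4)*(k:ℂ)*(t:ℂ)*(s:ℂ)*E*S*Complex.I^3 + (-1/16)*(k:ℂ)*(t:ℂ)^2*(s:ℂ) + (1/16)*(k:ℂ)*(t:ℂ)^2*(s:ℂ)*Complex.I + (1/8)*(k:ℂ)*(t:ℂ)^2*(s:ℂ)*Complex.I^2 + (1/8)*(k:ℂ)*(t:ℂ)^2*(s:ℂ)*Complex.I^3 + (3/16)*(k:ℂ)*(t:ℂ)^2*(s:ℂ)*Complex.I^4 + (1/16)*(k:ℂ)*(t:ℂ)^2*(s:ℂ)*Complex.I^5 + (1/32)*(k:ℂ)*(t:ℂ)^2*(s:ℂ)^3*Complex.I^2 + (3/32)*(k:ℂ)*(t:ℂ)^2*(s:ℂ)^3*Complex.I^3 + (3/32)*(k:ℂ)*(t:ℂ)^2*(s:ℂ)^3*Complex.I^4 + (1/32)*(k:ℂ)*(t:ℂ)^2*(s:ℂ)^3*Complex.I^5)*hs2C + ((-1/2)*(k:ℂ) + (1/2)*(k:ℂ)*(t:ℂ)*(s:ℂ)*E*S*Complex.I + (-1/8)*(k:ℂ)*(t:ℂ)^2*(s:ℂ)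 + (1/8)*(k:ℂ)*(t:ℂ)^2*(s:ℂ)*Complex.I + (3/8)*(k:ℂ)*(t:ℂ)^2*(s:ℂ)*Complex.I^2 + (1/8)*(k:ℂ)*(t:ℂ)^2*(s:ℂ)*Complex.I^3)*hI
  have keyB : (-Complex.I) * ((k:ℂ) * (t:ℂ) * ((s:ℝ):ℂ) * E * S + (k:ℂ)) = (((sk:ℝ):ℂ)*B)^2 := by
    rw [hB_def]
    linear_combination ((-1/4)*(s:ℂ)^2*S^2 + (1/2)*(s:ℂ)^2*S^2*Complex.I + (-1/4)*(s:ℂ)^2*S^2*Complex.I^2 + (1/4)*(t:ℂ)*(s:ℂ)^3*E*S*Complex.I + (-1/4)*(t:ℂ)*(s:ℂ)^3*E*S*Complex.I^3 + (-1/16)*(t:ℂ)^2*(s:ℂ)^4*E^2*Complex.I^2 + (-1/8)*(t:ℂ)^2*(s:ℂ)^4*E^2*Complex.I^3 + (-1/16)*(t:ℂ)^2*(s:ℂ)^4*E^2*Complex.I^4)*hskC + ((-1/16)*(k:ℂ)*(t:ℂ)^2*(s:ℂ)^4*Complex.I^2 + (-1/8)*(k:ℂ)*(t:ℂ)^2*(s:ℂ)^4*Complex.I^3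 + (-1/16)*(k:ℂ)*(t:ℂ)^2*(s:ℂ)^4*Complex.I^4)*hE2 + ((-1/4)*(k:ℂ)*(s:ℂ)^2 + (1/2)*(k:ℂ)*(s:ℂ)^2*Complex.I + (-1/4)*(k:ℂ)*(s:ℂ)^2*Complex.I^2)*hS2 + ((-1/4)*(k:ℂ) + (1/2)*(k:ℂ)*Complex.I + (-1/4)*(k:ℂ)*Complex.I^2 + (1/4)*(k:ℂ)*(t:ℂ)*(s:ℂ)*E*S*Complex.I + (-1/4)*(k:ℂ)*(t:ℂ)*(s:ℂ)*E*S*Complex.I^3 + (-1/16)*(k:ℂ)*(t:ℂ)^2*(s:ℂ) + (1/16)*(k:ℂ)*(t:ℂ)^2*(s:ℂ)*Complex.I + (1/8)*(k:ℂ)*(t:ℂ)^2*(s:ℂ)*Complex.I^2 + (1/8)*(k:ℂ)*(t:ℂ)^2*(s:ℂ)*Complex.I^3 + (3/16)*(k:ℂ)*(t:ℂ)^2*(s:ℂ)*Complex.I^4 + (1/16)*(k:ℂ)*(t:ℂ)^2*(s:ℂ)*Complex.I^5 + (1/32)*(k:ℂ)*(t:ℂ)^2*(s:ℂ)^3*Complex.I^2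 + (3/32)*(k:ℂ)*(t:ℂ)^2*(s:ℂ)^3*Complex.I^3 + (3/32)*(k:ℂ)*(t:ℂ)^2*(s:ℂ)^3*Complex.I^4 + (1/32)*(k:ℂ)*(t:ℂ)^2*(s:ℂ)^3*Complex.I^5)*hs2C + ((-1/2)*(k:ℂ) + (-1/2)*(k:ℂ)*(t:ℂ)*(s:ℂ)*E*S*Complex.I + (-1/8)*(k:ℂ)*(t:ℂ)^2*(s:ℂ) + (1/8)*(k:ℂ)*(t:ℂ)^2*(s:ℂ)*Complex.I + (3/8)*(k:ℂ)*(t:ℂ)^2*(s:ℂ)*Complex.I^2 + (1/8)*(k:ℂ)*(t:ℂ)^2*(s:ℂ)*Complex.I^3)*hI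
  -- positivity of real parts
  have hApos : 0 < s/2*(σ+μ) + s^2/4*(t*(p-q)) :=
    (aux_pos hs2 hs0 hs1 hσ0 hμ0 hσ2 hμ2 hσμ hrx hpq1 h2pq).1
  have hBpos : 0 < s/2*(σ+μ) - s^2/4*(t*(p-q)) :=
    (aux_pos hs2 hs0 hs1 hσ0 hμ0 hσ2 hμ2 hσμ hrx hpq1 h2pq).2
  have hAre : 0 < (((sk:ℝ):ℂ)*A).re := by
    have hre : A.re = s/2*(σ+μ) + s^2/4*(t*(p-q)) := by
      rw [hA_def, hE, hS_def]
      simp [Complex.add_re, Complex.add_im, Complex.mul_re, Complex.mul_im,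
        Complex.sub_re, Complex.sub_im, Complex.ofReal_re, Complex.ofReal_im,
        Complex.I_re, Complex.I_im, Complex.one_re, Complex.one_im, Complex.div_re,
        Complex.div_im]
      ring
    rw [Complex.re_ofReal_mul, hre]
    exact mul_pos hsk0 hApos
  have hBre : 0 < (((sk:ℝ):ℂ)*B).re := by
    have hre : B.re = s/2*(σ+μ) - s^2/4*(t*(p-q)) := by
      rw [hB_def, hE, hS_def]
      simp [Complex.add_re, Complex.add_im, Complex.mul_re, Complex.mul_im,
        Complex.sub_re, Complex.sub_im, Complex.ofReal_re, Complex.ofReal_im,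
        Complex.I_re, Complex.I_im, Complex.one_re, Complex.one_im, Complex.div_re,
        Complex.div_im]
      ring
    rw [Complex.re_ofReal_mul, hre]
    exact mul_pos hsk0 hBpos
  have G2 : alphaStar k (wCont k t) = Complex.I * ((k:ℂ) + (k:ℂ)*(t:ℂ)^2*c) := by
    rw [alphaStar, hwS, keyA, keyB, sqrt_of_sq hAre, sqrt_of_sq hBre]
    linear_combination ((-1/4)*(s:ℂ)^2*S^2 + (1/2)*(s:ℂ)^2*S^2*Complex.I + (-1/4)*(s:ℂ)^2*S^2*Complex.I^2 + (1/16)*(t:ℂ)^2*(s:ℂ)^4*E^2*Complex.I^2 + (1/8)*(t:ℂ)^2*(s:ℂ)^4*E^2*Complex.I^3 + (1/16)*(t:ℂ)^2*(s:ℂ)^4*E^2*Complex.I^4)*hskC + ((1/16)*(k:ℂ)*(t:ℂ)^2*(s:ℂ)^4*Complex.I^2 + (1/8)*(k:ℂ)*(t:ℂ)^2*(s:ℂ)^4*Complex.I^3 + (1/16)*(k:ℂ)*(t:ℂ)^2*(s:ℂ)^4*Complex.I^4)*hE2 + ((-1/4)*(k:ℂ)*(s:ℂ)^2 + (1/2)*(k:ℂ)*(s:ℂ)^2*Complex.I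 + (-1/4)*(k:ℂ)*(s:ℂ)^2*Complex.I^2)*hS2 + ((-1/4)*(k:ℂ) + (1/2)*(k:ℂ)*Complex.I + (-1/4)*(k:ℂ)*Complex.I^2 + (-1/16)*(k:ℂ)*(t:ℂ)^2*(s:ℂ) + (1/16)*(k:ℂ)*(t:ℂ)^2*(s:ℂ)*Complex.I + (-1/4)*(k:ℂ)*(t:ℂ)^2*(s:ℂ)*Complex.I^3 + (-3/16)*(k:ℂ)*(t:ℂ)^2*(s:ℂ)*Complex.I^4 + (-1/16)*(k:ℂ)*(t:ℂ)^2*(s:ℂ)*Complex.I^5 + (-1/32)*(k:ℂ)*(t:ℂ)^2*(s:ℂ)^3*Complex.I^2 + (-3/32)*(k:ℂ)*(t:ℂ)^2*(s:ℂ)^3*Complex.I^3 + (-3/32)*(k:ℂ)*(t:ℂ)^2*(s:ℂ)^3*Complex.I^4 + (-1/32)*(k:ℂ)*(t:ℂ)^2*(s:ℂ)^3*Complex.I^5)*hs2C + ((-1/2)*(k:ℂ) + (-1/8)*(k:ℂ)*(t:ℂ)^2*(s:ℂ) + (-3/8)*(k:ℂ)*(t:ℂ)^2*(s:ℂ)*Complex.I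 + (-3/8)*(k:ℂ)*(t:ℂ)^2*(s:ℂ)*Complex.I^2 + (-1/8)*(k:ℂ)*(t:ℂ)^2*(s:ℂ)*Complex.I^3)*hI + (-(Complex.I)*(k:ℂ)*(t:ℂ)^2)*hc
  refine ⟨G1, by rw [G1]; exact G2, ?_, ?_⟩
  · -- (iii)
    rw [G2, expc4, ← hs_def]
    linear_combination (Complex.I*(k:ℂ)*(t:ℂ)^2)*hc + ((k:ℂ)*(t:ℂ)^2*(s:ℂ)/2)*hI
  · -- abs bound
    rw [hwS]
    have hEabs : ‖E‖ = 1 := by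
      rw [hE, Complex.norm_def, Complex.normSq_apply]
      simp only [Complex.sub_re, Complex.sub_im, Complex.mul_re, Complex.mul_im,
        Complex.ofReal_re, Complex.ofReal_im, Complex.I_re, Complex.I_im]
      rw [show (q - (p * 0 - 0 * 1)) * (q - (p * 0 - 0 * 1)) +
          (0 - (p * 1 + 0 * 0)) * (0 - (p * 1 + 0 * 0)) = p^2 + q^2 by ring, hpq1,
        Real.sqrt_one]
    have hSabs : ‖S‖ = Real.sqrt r := by
      rw [hS_def, Complex.norm_def, Complex.normSq_apply]
      simp only [Complex.add_re, Complex.add_im, Complex.mul_re, Complex.mul_im,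
        Complex.ofReal_re, Complex.ofReal_im, Complex.I_re, Complex.I_im]
      rw [show (σ + (μ * 0 - 0 * 1)) * (σ + (μ * 0 - 0 * 1)) +
          (0 + (μ * 1 + 0 * 0)) * (0 + (μ * 1 + 0 * 0)) = σ^2 + μ^2 by ring]
      congr 1
      rw [hσ2, hμ2]; ring
    rw [norm_mul, norm_mul, norm_mul, norm_mul, hEabs, hSabs, Complex.norm_real,
      Complex.norm_real, Complex.norm_real, Real.norm_eq_abs, Real.norm_eq_abs, Real.norm_eq_abs, abs_of_pos hk, abs_of_pos hs0]
    have hmain : |t| * s * Real.sqrt r ≤ 1 + t^2 := aux_abs hs2 hs0 hs15 hr0 hr2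
    calc k * |t| * s * 1 * Real.sqrt r = k * (|t| * s * Real.sqrt r) := by ring
      _ ≤ k * (1 + t^2) := by exact mul_le_mul_of_nonneg_left hmain hk.le

end
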